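/- arXiv:2002.01058 — 13 statements merged into one kernel-verified Lean document; each statement's English description precedes it below -/
import Mathlib

section
/- Every specific set of varying S-probabilities is complemented, i.e., for each p ∈ P the infimum p ∧ p' in P is 0 (equivalently p ∨ p' = 1). -/
/-- An `S`-probability: a function from `S` to `[0,1]`. -/
def IsProb {S : Type*} (p : S → ℝ) : Prop := ∀ s, 0 ≤ p s ∧ p s ≤ 1

/-- `p` and `q` are disjoint in `P`: the only common lower bound in `P` is `0`. -/
def Disj {S : Type*} (P : Set (S → ℝ)) (p q : S → ℝ) : Prop :=
  ∀ x ∈ P, x ≤ p → x ≤ q → x = 0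

/-- `r` is the supremum of `p` and `q` within `P`. -/
def IsSupIn {S : Type*} (P : Set (S → ℝ)) (p q r : S → ℝ) : Prop :=
  r ∈ P ∧ p ≤ r ∧ q ≤ r ∧ ∀ x ∈ P, p ≤ x → q ≤ x → r ≤ x

/-- `r` is the infimum of `p` and `q` within `P`. -/
def IsInfIn {S : Type*} (P : Set (S → ℝ)) (p q r : S → ℝ) : Prop :=
  r ∈ P ∧ r ≤ p ∧ r ≤ q ∧ ∀ x ∈ P, x ≤ p → x ≤ q → x ≤ r

/-- A specific set of `S`-probabilities. -/
def Specific {S : Type*} (P : Set (S → ℝ)) : Prop :=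
  (∀ p ∈ P, IsProb p) ∧ (0 : S → ℝ) ∈ P ∧ (1 : S → ℝ) ∈ P ∧
  (∀ p ∈ P, (1 - p) ∈ P) ∧
  (∀ p ∈ P, ∀ q ∈ P, Disj P p q → p + q ∈ P)

/-- A varying `S`-probability: neither `≤ 1/2` nor `≥ 1/2` unless `0` or `1`. -/
def Varying {S : Type*} (p : S → ℝ) : Prop :=
  p ≠ 0 → p ≠ 1 → ¬(p ≤ fun _ => (1/2 : ℝ)) ∧ ¬((fun _ => (1/2 : ℝ)) ≤ p)

/-- A generalized field of events. -/
def GFE {S : Type*} (P : Set (S → ℝ)) : Prop :=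
  (∀ p ∈ P, IsProb p) ∧ (0 : S → ℝ) ∈ P ∧ (1 : S → ℝ) ∈ P ∧
  (∀ p ∈ P, (1 - p) ∈ P) ∧
  (∀ p ∈ P, ∀ q ∈ P, p ≤ 1 - q → p + q ∈ P)

/-- Boolean: disjoint elements are orthogonal. -/
def BooleanSet {S : Type*} (P : Set (S → ℝ)) : Prop :=
  ∀ p ∈ P, ∀ q ∈ P, Disj P p q → p ≤ 1 - q

/-- Complemented: `p ∧ p' = 0` for every `p ∈ P`. -/
def Complemented {S : Type*} (P : Set (S → ℝ)) : Prop :=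
  ∀ p ∈ P, Disj P p (1 - p)

/-- A structured set of `S`-probabilities. -/
def Structured {S : Type*} (P : Set (S → ℝ)) : Prop :=
  (∀ p ∈ P, IsProb p) ∧ (0 : S → ℝ) ∈ P ∧ (1 : S → ℝ) ∈ P ∧
  (∀ p ∈ P, (1 - p) ∈ P) ∧
  (∀ p ∈ P, ∀ q ∈ P, ∀ r ∈ P, p ≤ 1 - q → r ≤ 1 - q → Disj P p r → p + q + r ∈ P)

/-- A `∨`-specific set of `S`-probabilities: specific, and the sum of disjoint
elements is their supremum in `P`. -/
def VSpecific {S : Type*} (P : Set (S → ℝ)) : Prop :=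
  Specific P ∧ ∀ p ∈ P, ∀ q ∈ P, Disj P p q → IsSupIn P p q (p + q)

/-- A weakly structured set of `S`-probabilities. -/
def WeaklyStructured {S : Type*} (P : Set (S → ℝ)) : Prop :=
  (∀ p ∈ P, IsProb p) ∧ (0 : S → ℝ) ∈ P ∧ (1 : S → ℝ) ∈ P ∧
  (∀ p ∈ P, (1 - p) ∈ P) ∧
  (∀ p ∈ P, ∀ q ∈ P, ∀ r ∈ P, p ≤ 1 - q → r ≤ 1 - q → Disj P p r → p + q + r ≤ 1)

theorem stmt_2 {S : Type*} (P : Set (S → ℝ)) (hP : Specific P)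
    (hv : ∀ p ∈ P, Varying p) :
    ∀ p ∈ P, IsInfIn P p (1 - p) 0 ∧ IsSupIn P p (1 - p) 1 := by

  obtain ⟨hprob, h0, h1, hcompl, hsum⟩ := hP
  intro p hp
  have hpprob := hprob p hp
  constructor
  · refine ⟨h0, fun s => (hpprob s).1, fun s => by simpa using (hpprob s).2, ?_⟩
    intro x hx hxp hxp'
    have hxhalf : x ≤ fun _ => (1/2 : ℝ) := by
      intro s
      have h1' : x s ≤ p s := hxp s
      have h2' : x s ≤ 1 - p s := hxp' s
      simp only; linarith
    by_cases hx0 : x = 0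
    · exact hx0.le
    · exfalso
      by_cases hx1 : x = 1
      · obtain ⟨s, hs⟩ := Function.ne_iff.mp hx0
        have := hxhalf s
        rw [hx1] at this
        norm_num at this
      · exact ((hv x hx) hx0 hx1).1 hxhalf
  · refine ⟨h1, fun s => (hpprob s).2, fun s => by simpa using (hpprob s).1, ?_⟩
    intro x hx hpx hp'x
    have hxhalf : ∀ s, (1/2 : ℝ) ≤ x s := by
      intro s
      have h1' : p s ≤ x s := hpx s
      have h2' : 1 - p s ≤ x s := hp'x s
      linarith
    have hy : (1 - x) ∈ P := hcompl x hx
    have hyhalf : (1 - x) ≤ fun _ => (1/2 : ℝ) := by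
      intro s; have := hxhalf s; simp only [Pi.sub_apply, Pi.one_apply]; linarith
    by_cases hy0 : (1 - x) = (0 : S → ℝ)
    · intro s
      have := congrFun hy0 s
      simp only [Pi.sub_apply, Pi.one_apply, Pi.zero_apply] at this
      simp only [Pi.one_apply]; linarith
    · exfalso
      by_cases hy1 : (1 - x) = (1 : S → ℝ)
      · obtain ⟨s, hs⟩ := Function.ne_iff.mp hy0
        have h := congrFun hy1 s
        simp only [Pi.sub_apply, Pi.one_apply] at h
        have := hxhalf s
        linarith
      · exact ((hv _ hy) hy0 hy1).1 hyhalf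
end

section
/- In a specific set P of varying S-probabilities, if p, q ∈ P are orthogonal (p ≤ q', i.e., p ≤ 1 − q pointwise), then p and q are disjoint in P (the only lower bound of both in P is 0). -/
theorem stmt_3 {S : Type*} (P : Set (S → ℝ)) (hP : Specific P)
    (hv : ∀ p ∈ P, Varying p) (p q : S → ℝ) (hp : p ∈ P) (hq : q ∈ P)
    (horth : p ≤ 1 - q) :
    Disj P p q := by
  intro x hx hxp hxq
  have hhalf : x ≤ fun _ => (1/2 : ℝ) := by
    intro s
    have h1 : x s ≤ p s := hxp s
    have h2 : x s ≤ q s := hxq s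
    have h3 : p s ≤ 1 - q s := horth s
    simp only
    linarith
  by_contra hx0
  by_cases hx1 : x = 1
  · obtain ⟨s⟩ : Nonempty S := by
      by_contra hS
      exact hx0 (funext fun s => absurd ⟨s⟩ hS)
    have := hhalf s
    rw [hx1] at this
    norm_num at this
  · exact ((hv x hx) hx0 hx1).1 hhalf
end

section
/- Every specific set of varying S-probabilities is a generalized field of events: if p, q ∈ P with p ≤ 1 − q pointwise, then p + q ∈ P. -/
theorem stmt_4 {S : Type*} (P : Set (S → ℝ)) (hP : Specific P)
    (hv : ∀ p ∈ P, Varying p) :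
    GFE P := by
  obtain ⟨h1, h2, h3, h4, h5⟩ := hP
  refine ⟨h1, h2, h3, h4, ?_⟩
  intro p hp q hq hpq
  apply h5 p hp q hq
  intro x hx hxp hxq
  by_cases hx0 : x = 0
  · exact hx0
  by_cases hx1 : x = 1
  · exfalso
    obtain ⟨s, hs⟩ : ∃ s, x s ≠ 0 := by
      by_contra h; push_neg at h; exact hx0 (funext h)
    have h1' : x s ≤ p s := hxp s
    have h2' : p s ≤ 1 - q s := by simpa using hpq s
    have h3' : x s ≤ q s := hxq s
    rw [hx1] at h1' h3'
    simp only [Pi.one_apply] at h1' h3'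
    linarith
  · have hh := (hv x hx hx0 hx1).1
    have : x ≤ fun _ => (1/2 : ℝ) := by
      intro s
      have h1' : x s ≤ p s := hxp s
      have h2' : p s ≤ 1 - q s := by simpa using hpq s
      have h3' : x s ≤ q s := hxq s
      show x s ≤ 1/2
      linarith only [h1', h2', h3']
    exact absurd this hh
end

section
/- Let P be a set of S-probabilities containing 0 and 1 and closed under p ↦ 1−p. Then all elements of P are varying if and only if P is complemented (p ∧ p' = 0 in P for all p ∈ P). -/
theorem stmt_5 {S : Type*} (P : Set (S → ℝ))
    (hprob : ∀ p ∈ P, IsProb p)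
    (h0 : (0 : S → ℝ) ∈ P) (h1 : (1 : S → ℝ) ∈ P)
    (hc : ∀ p ∈ P, (1 - p) ∈ P) :
    (∀ p ∈ P, Varying p) ↔ Complemented P := by
  constructor
  · intro hv p hp x hx hxp hxp'
    have hhalf : x ≤ fun _ => (1/2 : ℝ) := by
      intro s
      have h1 := hxp s
      have h2 := hxp' s
      simp only [Pi.sub_apply, Pi.one_apply] at h2
      dsimp
      linarith
    by_cases hx0 : x = 0
    · exact hx0
    by_cases hx1 : x = 1
    · subst hx1
      funext s
      have := hhalf s
      simp at this
      linarith [this]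
    · exact absurd hhalf ((hv x hx hx0 hx1).1
        )
  · intro hcomp p hp hp0 hp1
    constructor
    · intro hle
      apply hp0
      apply hcomp p hp p hp le_rfl
      intro s
      have := hle s
      simp only [Pi.sub_apply, Pi.one_apply]
      dsimp at this
      linarith
    · intro hle
      apply hp1
      have hq : (1 - p) ∈ P := hc p hp
      have := hcomp (1 - p) hq (1 - p) hq le_rfl
      have hz : (1 : S → ℝ) - p = 0 := by
        apply this
        intro s
        have := hle s
        simp only [Pi.sub_apply, Pi.one_apply]
        dsimp at this
        linarith
      funext s
      have := congrFun hz s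
      simp only [Pi.sub_apply, Pi.one_apply, Pi.zero_apply] at this
      simp only [Pi.one_apply]
      linarith
end

section
/- A set P of S-probabilities is a specific set of varying S-probabilities if and only if P is a complemented Boolean generalized field of events. -/
theorem stmt_6 {S : Type*} (P : Set (S → ℝ)) :
    (Specific P ∧ ∀ p ∈ P, Varying p) ↔
      (GFE P ∧ BooleanSet P ∧ Complemented P) := by
  constructor
  · rintro ⟨⟨hprob, h0, h1, hneg, hsum⟩, hvar⟩
    by_cases hS : Nonempty S
    · obtain ⟨s0⟩ := hS
      -- helper: x ∈ P with x ≤ 1/2 pointwise implies x = 0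
      have hhalf : ∀ x ∈ P, (∀ s, x s ≤ 1/2) → x = 0 := by
        intro x hx hle
        rcases eq_or_ne x 0 with h | h
        · exact h
        rcases eq_or_ne x 1 with h1' | h1'
        · exfalso; have := hle s0; rw [h1'] at this; norm_num at this
        · exact absurd (fun s => hle s) (hvar x hx h h1').1
      have hBool : BooleanSet P := by
        intro p hp q hq hd
        have hpq := hprob _ (hsum p hp q hq hd)
        intro s
        have := (hpq s).2
        simp only [Pi.add_apply] at this
        simp only [Pi.sub_apply, Pi.one_apply]
        linarith
      have hComp : Complemented P := by
        intro p hp x hx hxp hxp'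
        apply hhalf x hx
        intro s
        have h1 := hxp s
        have h2 := hxp' s
        simp only [Pi.sub_apply, Pi.one_apply] at h2
        linarith
      refine ⟨⟨hprob, h0, h1, hneg, ?_⟩, hBool, hComp⟩
      intro p hp q hq hle
      apply hsum p hp q hq
      intro x hx hxp hxq
      apply hhalf x hx
      intro s
      have h1 := hxp s
      have h2 := hxq s
      have h3 := hle s
      simp only [Pi.sub_apply, Pi.one_apply] at h3
      linarith
    · have : Subsingleton (S → ℝ) := ⟨fun f g => funext fun s => absurd ⟨s⟩ hS⟩
      refine ⟨⟨hprob, h0, h1, hneg, fun p hp q hq _ => ?_⟩,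
        fun p hp q hq _ => ?_, fun p hp x hx _ _ => Subsingleton.elim x 0⟩
      · rw [Subsingleton.elim (p + q) (0 : S → ℝ)]; exact h0
      · rw [Subsingleton.elim p (0 : S → ℝ), Subsingleton.elim q (1 : S → ℝ)]
        simp
  · rintro ⟨⟨hprob, h0, h1, hneg, hsum⟩, hBool, hComp⟩
    refine ⟨⟨hprob, h0, h1, hneg, fun p hp q hq hd => hsum p hp q hq (hBool p hp q hq hd)⟩, ?_⟩
    intro p hp hp0 hp1
    constructor
    · intro hle
      apply hp0
      apply hComp p hp p hp le_rfl
      intro s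
      have := hle s
      simp only [Pi.sub_apply, Pi.one_apply]
      linarith
    · intro hle
      apply hp1
      have h := hComp p hp (1 - p) (hneg p hp) ?_ le_rfl
      · have : (1 : S → ℝ) - p = 0 := h
        funext s
        have := congrFun this s
        simp only [Pi.sub_apply, Pi.one_apply, Pi.zero_apply] at this
        simp only [Pi.one_apply]
        linarith
      · intro s
        have := hle s
        simp only [Pi.sub_apply, Pi.one_apply]
        linarith
end

section
/- Every finite specific set of varying S-probabilities is a Boolean algebra (as a poset ordered pointwise with complementation p ↦ 1−p). -/
/-!
In `P`, disjointness is the same as orthogonality `p + q ≤ 1`: a common lower bound `x` of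
orthogonal elements satisfies `x + x ≤ 1`, and a varying `x ≤ 1/2` is `0`. Hence `P` is closed
under orthogonal sums and under `q - p` for `p ≤ q`, and each atom is below or orthogonal to each
element. An atom `a` below an orthogonal sum `p + q` lies below `p` or `q`: otherwise a second atom
`c ≤ q` with `c ≤ p + a` exists, and pumping `p` by `c - a` leaves `[0, 1]`. So sums of distinct
atoms lie in `P` and lie above exactly the summed atoms; as `P` is finite, every element is such a
sum, and `B ↦ ∑ B` is an order isomorphism from the finsets of atoms onto `P` sending `Bᶜ` to
`1 - ∑ B`.
-/

lemma Varying.eq_zero_of_le_of_add_le_one {S : Type*} {x p : S → ℝ} (hx : Varying x)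
    (hxp : x ≤ p) (h : x + p ≤ 1) : x = 0 := by
  by_contra hx0
  have hhalf : x ≤ fun _ => 1 / 2 := fun s => by
    have := h s
    have := hxp s
    simp only [Pi.add_apply, Pi.one_apply] at *
    linarith
  by_cases hx1 : x = 1
  · obtain ⟨s, -⟩ : ∃ s, x s ≠ 0 := by simpa [funext_iff] using hx0
    have := hhalf s
    simp only [hx1, Pi.one_apply] at this
    norm_num at this
  · exact (hx hx0 hx1).1 hhalf

lemma Varying.exists_half_lt {S : Type*} {x : S → ℝ} (hx : Varying x) (hx0 : x ≠ 0) :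
    ∃ s, 1 / 2 < x s := by
  by_contra! h
  refine hx0 (hx.eq_zero_of_le_of_add_le_one le_rfl fun s => ?_)
  have := h s
  simp only [Pi.add_apply, Pi.one_apply]
  linarith

def atoms {S : Type*} (P : Set (S → ℝ)) : Set (S → ℝ) := {a | Minimal (· ∈ P \ {0}) a}

lemma atoms_subset {S : Type*} {P : Set (S → ℝ)} : atoms P ⊆ P := fun _ ha => ha.prop.1

lemma ne_zero_of_mem_atoms {S : Type*} {P : Set (S → ℝ)} {a : S → ℝ} (ha : a ∈ atoms P) :
    a ≠ 0 :=
  ha.prop.2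

lemma Set.Finite.exists_mem_atoms_le {S : Type*} {P : Set (S → ℝ)} {p : S → ℝ}
    (hfin : P.Finite) (hp : p ∈ P) (hp0 : p ≠ 0) : ∃ a ∈ atoms P, a ≤ p := by
  obtain ⟨a, hap, ha⟩ := (hfin.sdiff (t := {0})).exists_le_minimal ⟨hp, hp0⟩
  exact ⟨a, ha, hap⟩

namespace Specific

variable {S : Type*} {P : Set (S → ℝ)} {a c p q : S → ℝ}

lemma nonneg (hP : Specific P) (hp : p ∈ P) : 0 ≤ p := fun s => (hP.1 p hp s).1

lemma le_one (hP : Specific P) (hp : p ∈ P) : p ≤ 1 := fun s => (hP.1 p hp s).2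

lemma one_sub_mem (hP : Specific P) (hp : p ∈ P) : 1 - p ∈ P := hP.2.2.2.1 p hp

lemma add_mem (hP : Specific P) (hp : p ∈ P) (hq : q ∈ P) (h : Disj P p q) : p + q ∈ P :=
  hP.2.2.2.2 p hp q hq h

variable (hP : Specific P) (hv : ∀ p ∈ P, Varying p)
include hP hv

lemma disj_iff_add_le_one (hp : p ∈ P) (hq : q ∈ P) : Disj P p q ↔ p + q ≤ 1 :=
  ⟨fun h => hP.le_one (hP.add_mem hp hq h), fun h x hx hxp hxq =>
    (hv x hx).eq_zero_of_le_of_add_le_one hxq ((add_le_add_left hxp q).trans h)⟩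

lemma add_mem_of_add_le_one (hp : p ∈ P) (hq : q ∈ P) (h : p + q ≤ 1) : p + q ∈ P :=
  hP.add_mem hp hq ((hP.disj_iff_add_le_one hv hp hq).2 h)

lemma sub_mem (hp : p ∈ P) (hq : q ∈ P) (hpq : p ≤ q) : q - p ∈ P := by
  have h : p + (1 - q) ≤ 1 := fun s => by
    have := hpq s
    simp only [Pi.add_apply, Pi.sub_apply, Pi.one_apply]
    linarith
  convert hP.one_sub_mem (hP.add_mem_of_add_le_one hv hp (hP.one_sub_mem hq) h) using 1
  abel

lemma le_or_add_le_one_of_mem_atoms (ha : a ∈ atoms P) (hq : q ∈ P) : a ≤ q ∨ a + q ≤ 1 := by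
  refine (em (a ≤ q)).imp id fun haq => (hP.disj_iff_add_le_one hv (atoms_subset ha) hq).1 ?_
  intro x hx hxa hxq
  by_contra hx0
  exact haq ((ha.eq_of_le ⟨hx, hx0⟩ hxa) ▸ hxq)

lemma add_le_one_of_mem_atoms (ha : a ∈ atoms P) (hc : c ∈ atoms P) (hac : a ≠ c) :
    a + c ≤ 1 :=
  (hP.le_or_add_le_one_of_mem_atoms hv ha (atoms_subset hc)).resolve_left
    fun h => hac (hc.eq_of_le ha.prop h)

lemma add_sub_mem_of_mem_atoms (ha : a ∈ atoms P) (hc : c ∈ atoms P) (hp : p ∈ P)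
    (hap : ¬ a ≤ p) (hcap : ¬ c + (a + p) ≤ 1) : a + p - c ∈ P := by
  have hap' : a + p ∈ P := hP.add_mem_of_add_le_one hv (atoms_subset ha) hp
    ((hP.le_or_add_le_one_of_mem_atoms hv ha hp).resolve_left hap)
  exact hP.sub_mem hv (atoms_subset hc) hap'
    ((hP.le_or_add_le_one_of_mem_atoms hv hc hap').resolve_right hcap)

/-- If `a ≤ p + c`, the elements `p + n • (a - c)` all lie in `P`, but they are unbounded at a
point where `a > 1/2`. -/
lemma not_le_add_of_mem_atoms (ha : a ∈ atoms P) (hc : c ∈ atoms P) (hac : a ≠ c) (hp : p ∈ P)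
    (hap : ¬ a ≤ p) (hcp : c + p ≤ 1) : ¬ a ≤ p + c := by
  intro hapc
  have hac1 := hP.add_le_one_of_mem_atoms hv ha hc hac
  obtain ⟨s₀, hs₀⟩ := (hv a (atoms_subset ha)).exists_half_lt (ne_zero_of_mem_atoms ha)
  obtain ⟨s₁, hs₁⟩ := (hv c (atoms_subset hc)).exists_half_lt (ne_zero_of_mem_atoms hc)
  have h₀ := hac1 s₀
  have h₁ := hac1 s₁
  have hapc₀ := hapc s₀
  have hcp₁ := hcp s₁
  have hp₀ : 0 ≤ p s₀ := hP.nonneg hp s₀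
  simp only [Pi.add_apply, Pi.one_apply] at h₀ h₁ hapc₀ hcp₁
  set B : ℕ → S → ℝ := fun n => p + (n : ℝ) • (a - c) with hB
  have hB_apply (n : ℕ) (s : S) : B n s = p s + n * (a s - c s) := rfl
  have hgrow (n : ℕ) : 0 ≤ (n : ℝ) * (a s₀ - c s₀) := mul_nonneg n.cast_nonneg (by linarith)
  have hnot : ∀ n, ¬ a ≤ B n
    | 0 => by simpa [hB] using hap
    | n + 1 => fun h => by
      have := h s₁
      have : (n : ℝ) * (a s₁ - c s₁) ≤ 0 :=
        mul_nonpos_of_nonneg_of_nonpos n.cast_nonneg (by linarith)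
      rw [hB_apply] at *
      push_cast at *
      linarith
  have hmem (n : ℕ) : B n ∈ P := by
    induction n with
    | zero => simpa [hB] using hp
    | succ n ih =>
      convert hP.add_sub_mem_of_mem_atoms hv ha hc ih (hnot n) fun h => ?_ using 1
      · ext s
        simp only [hB_apply, Pi.add_apply, Pi.sub_apply]
        push_cast
        ring
      · have := h s₀
        simp only [Pi.add_apply, Pi.one_apply, hB_apply] at this
        linarith [hgrow n]
  obtain ⟨n, hn⟩ := exists_nat_gt (1 / (a s₀ - c s₀))
  rw [div_lt_iff₀ (by linarith)] at hn
  have : B n s₀ ≤ 1 := hP.le_one (hmem n) s₀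
  rw [hB_apply] at this
  linarith

lemma exists_mem_atoms_le_of_le_add (hfin : P.Finite) (ha : a ∈ atoms P) (hp : p ∈ P)
    (hq : q ∈ P) (hle : a ≤ p + q) (hap : a + p ≤ 1) : ∃ c ∈ atoms P, c ≤ q ∧ c ≤ p + a := by
  have hpa : p + a ∈ P := hP.add_mem_of_add_le_one hv hp (atoms_subset ha) (by rwa [add_comm])
  have hnd : ¬ Disj P (p + a) q := fun hD => by
    refine ne_zero_of_mem_atoms ha ((hv a (atoms_subset ha)).eq_zero_of_le_of_add_le_one hle ?_)
    have := (hP.disj_iff_add_le_one hv hpa hq).1 hD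
    rwa [add_comm p a, add_assoc] at this
  simp only [Disj, not_forall] at hnd
  obtain ⟨x, hx, hxpa, hxq, hx0⟩ := hnd
  obtain ⟨c, hc, hcx⟩ := hfin.exists_mem_atoms_le hx hx0
  exact ⟨c, hc, hcx.trans hxq, hcx.trans hxpa⟩

lemma le_or_le_of_le_add (hfin : P.Finite) (ha : a ∈ atoms P) (hp : p ∈ P) (hq : q ∈ P)
    (hpq : p + q ≤ 1) (hle : a ≤ p + q) : a ≤ p ∨ a ≤ q := by
  by_contra! h
  obtain ⟨hap, haq⟩ := h
  have hap1 := (hP.le_or_add_le_one_of_mem_atoms hv ha hp).resolve_left hap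
  obtain ⟨c, hc, hcq, hcpa⟩ := hP.exists_mem_atoms_le_of_le_add hv hfin ha hp hq hle hap1
  have hcp : c + p ≤ 1 := (add_le_add_left hcq p).trans (by rwa [add_comm])
  have hcp' : ¬ c ≤ p := fun h =>
    ne_zero_of_mem_atoms hc ((hv c (atoms_subset hc)).eq_zero_of_le_of_add_le_one h hcp)
  exact hP.not_le_add_of_mem_atoms hv hc ha (fun h => haq (h ▸ hcq)) hp hcp' hap1 hcpa

section Sums

variable (hfin : P.Finite)
include hfin

lemma sum_mem_and_not_le_sum (B : Finset (atoms P)) :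
    ∑ a ∈ B, (a : S → ℝ) ∈ P ∧ ∀ c : atoms P, c ∉ B → ¬ (c : S → ℝ) ≤ ∑ a ∈ B, (a : S → ℝ) := by
  classical
  induction B using Finset.induction_on with
  | empty =>
    refine ⟨by simpa using hP.2.1, fun c _ hc => ne_zero_of_mem_atoms c.2 ?_⟩
    exact le_antisymm (by simpa using hc) (hP.nonneg (atoms_subset c.2))
  | insert x B hx ih =>
    obtain ⟨hB, hnle⟩ := ih
    have hxB := (hP.le_or_add_le_one_of_mem_atoms hv x.2 hB).resolve_left (hnle x hx)
    rw [Finset.sum_insert hx]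
    refine ⟨hP.add_mem_of_add_le_one hv (atoms_subset x.2) hB hxB, fun c hc hle => ?_⟩
    rw [Finset.mem_insert, not_or] at hc
    rcases hP.le_or_le_of_le_add hv hfin c.2 (atoms_subset x.2) hB hxB hle with h | h
    · exact hc.1 (Subtype.ext (x.2.eq_of_le c.2.prop h))
    · exact hnle c hc.2 h

lemma sum_mem (B : Finset (atoms P)) : ∑ a ∈ B, (a : S → ℝ) ∈ P :=
  (hP.sum_mem_and_not_le_sum hv hfin B).1

lemma coe_le_sum_iff (B : Finset (atoms P)) (c : atoms P) :
    (c : S → ℝ) ≤ ∑ a ∈ B, (a : S → ℝ) ↔ c ∈ B :=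
  ⟨not_imp_not.1 ((hP.sum_mem_and_not_le_sum hv hfin B).2 c),
    Finset.single_le_sum (f := fun a : atoms P => (a : S → ℝ))
      fun a _ => hP.nonneg (atoms_subset a.2)⟩

lemma sum_le_sum_iff (B C : Finset (atoms P)) :
    ∑ a ∈ B, (a : S → ℝ) ≤ ∑ a ∈ C, (a : S → ℝ) ↔ B ⊆ C :=
  ⟨fun h c hc =>
    (hP.coe_le_sum_iff hv hfin C c).1 (((hP.coe_le_sum_iff hv hfin B c).2 hc).trans h),
    fun h => Finset.sum_le_sum_of_subset_of_nonneg h fun a _ _ => hP.nonneg (atoms_subset a.2)⟩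

lemma sum_injective : Function.Injective fun B : Finset (atoms P) => ∑ a ∈ B, (a : S → ℝ) :=
  fun B C h =>
    ((hP.sum_le_sum_iff hv hfin B C).1 h.le).antisymm ((hP.sum_le_sum_iff hv hfin C B).1 h.ge)

lemma exists_sum_eq (hp : p ∈ P) : ∃ B : Finset (atoms P), ∑ a ∈ B, (a : S → ℝ) = p := by
  classical
  refine (hfin.wellFoundedOn (r := (· < ·))).induction
    (P := fun p => ∃ B : Finset (atoms P), ∑ a ∈ B, (a : S → ℝ) = p) hp fun p hp ih => ?_
  by_cases hp0 : p = 0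
  · exact ⟨∅, by simp [hp0]⟩
  obtain ⟨a, ha, hap⟩ := hfin.exists_mem_atoms_le hp hp0
  have hlt : p - a < p :=
    sub_lt_self p ((hP.nonneg (atoms_subset ha)).lt_of_ne (ne_zero_of_mem_atoms ha).symm)
  obtain ⟨B, hB⟩ := ih (p - a) (hP.sub_mem hv (atoms_subset ha) hp hap) hlt
  have haB : (⟨a, ha⟩ : atoms P) ∉ B := fun h => by
    rw [← hP.coe_le_sum_iff hv hfin, hB] at h
    refine ne_zero_of_mem_atoms ha ((hv a (atoms_subset ha)).eq_zero_of_le_of_add_le_one h ?_)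
    rw [add_sub_cancel]
    exact hP.le_one hp
  exact ⟨insert ⟨a, ha⟩ B, by rw [Finset.sum_insert haB, hB, add_sub_cancel]⟩

lemma sum_compl [Fintype (atoms P)] [DecidableEq (atoms P)] (B : Finset (atoms P)) :
    ∑ a ∈ Bᶜ, (a : S → ℝ) = 1 - ∑ a ∈ B, (a : S → ℝ) := by
  obtain ⟨U, hU⟩ := hP.exists_sum_eq hv hfin hP.2.2.1
  have hUniv : U = Finset.univ := Finset.eq_univ_of_forall fun c =>
    (hP.coe_le_sum_iff hv hfin U c).1 (hU ▸ hP.le_one (atoms_subset c.2))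
  rw [eq_sub_iff_add_eq', Finset.sum_add_sum_compl, ← hUniv, hU]

end Sums

end Specific

theorem stmt_7 {S : Type*} (P : Set (S → ℝ)) (hP : Specific P)
    (hv : ∀ p ∈ P, Varying p) (hfin : P.Finite) :
    ∃ B : BooleanAlgebra {p : S → ℝ // p ∈ P},
      (∀ x y : {p : S → ℝ // p ∈ P}, B.le x y ↔ (x : S → ℝ) ≤ (y : S → ℝ)) ∧
      (∀ x : {p : S → ℝ // p ∈ P},
        ((B.compl x : {p : S → ℝ // p ∈ P}) : S → ℝ) = 1 - (x : S → ℝ)) := by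
  classical
  have : Fintype (atoms P) := (hfin.subset atoms_subset).fintype
  let e : Finset (atoms P) ≃ {p : S → ℝ // p ∈ P} := Equiv.ofBijective
    (fun B => ⟨∑ a ∈ B, (a : S → ℝ), hP.sum_mem hv hfin B⟩)
    ⟨fun B C h => hP.sum_injective hv hfin (congrArg Subtype.val h), fun p => by
      obtain ⟨B, hB⟩ := hP.exists_sum_eq hv hfin p.2
      exact ⟨B, Subtype.ext hB⟩⟩
  refine ⟨e.symm.booleanAlgebra, fun x y => ?_, fun x => ?_⟩
  · obtain ⟨B, rfl⟩ := e.surjective x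
    obtain ⟨C, rfl⟩ := e.surjective y
    show e.symm (e B) ≤ e.symm (e C) ↔ _
    rw [Equiv.symm_apply_apply, Equiv.symm_apply_apply]
    exact (hP.sum_le_sum_iff hv hfin B C).symm
  · obtain ⟨B, rfl⟩ := e.surjective x
    show ((e (e.symm (e B))ᶜ : {p : S → ℝ // p ∈ P}) : S → ℝ) = _
    rw [Equiv.symm_apply_apply]
    exact hP.sum_compl hv hfin B
end

section
/- Every structured set of S-probabilities is ∨-specific: if p, q ∈ P with p ∧ q = 0 in P, then p + q belongs to P and equals the supremum p ∨ q in P. -/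
theorem stmt_8 {S : Type*} (P : Set (S → ℝ)) (hP : Structured P) :
    ∀ p ∈ P, ∀ q ∈ P, Disj P p q → p + q ∈ P ∧ IsSupIn P p q (p + q) := by
  obtain ⟨hprob, h0, h1, hcompl, hstr⟩ := hP
  intro p hp q hq hdisj
  have hmem : p + q ∈ P := by
    have := hstr p hp 0 h0 q hq ?_ ?_ hdisj
    · simpa using this
    · intro s; simpa using (hprob p hp s).2
    · intro s; simpa using (hprob q hq s).2
  refine ⟨hmem, hmem, ?_, ?_, ?_⟩
  · intro s; simpa using (hprob q hq s).1
  · intro s; simpa using (hprob p hp s).1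
  · intro x hx hpx hqx
    have hr : (1 - x) ∈ P := hcompl x hx
    have key : p + (1 - x) + q ∈ P := by
      refine hstr p hp (1 - x) hr q hq ?_ ?_ hdisj
      · intro s; simpa using hpx s
      · intro s; simpa using hqx s
    have hle1 : ∀ s, (p + (1 - x) + q) s ≤ 1 := fun s => (hprob _ key s).2
    intro s
    have := hle1 s
    simp only [Pi.add_apply, Pi.sub_apply, Pi.one_apply] at this ⊢
    linarith
end

section
/- Every ∨-specific set of S-probabilities is weakly structured: if p, q, r ∈ P with p ≤ q', r ≤ q', and p ∧ r = 0 in P, then p + q + r ≤ 1 pointwise. -/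
theorem stmt_9 {S : Type*} (P : Set (S → ℝ)) (hP : VSpecific P) :
    WeaklyStructured P := by
  obtain ⟨⟨hprob, h0, h1, hcompl, hsum⟩, hsup⟩ := hP
  refine ⟨hprob, h0, h1, hcompl, ?_⟩
  intro p hp q hq r hr hpq hrq hdisj
  have h1q : (1 - q) ∈ P := hcompl q hq
  have hle : p + r ≤ 1 - q := (hsup p hp r hr hdisj).2.2.2 (1 - q) h1q hpq hrq
  intro s
  have := hle s
  simp only [Pi.add_apply, Pi.sub_apply, Pi.one_apply] at this ⊢
  linarith
end

section
/- A set P of S-probabilities is ∨-specific if and only if it is both specific and weakly structured. -/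
theorem stmt_10 {S : Type*} (P : Set (S → ℝ)) :
    VSpecific P ↔ (Specific P ∧ WeaklyStructured P) := by
  constructor
  · rintro ⟨hs, hsup⟩
    refine ⟨hs, hs.1, hs.2.1, hs.2.2.1, hs.2.2.2.1, ?_⟩
    intro p hp q hq r hr hpq hrq hd
    have hq' : (1 - q) ∈ P := hs.2.2.2.1 q hq
    obtain ⟨_, _, _, hle⟩ := hsup p hp r hr hd
    have := hle (1 - q) hq' hpq hrq
    intro s
    have := this s
    simp only [Pi.add_apply, Pi.sub_apply, Pi.one_apply] at *
    linarith
  · rintro ⟨hs, hw⟩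
    refine ⟨hs, ?_⟩
    intro p hp q hq hd
    have hpP := hs.1 p hp
    have hqP := hs.1 q hq
    refine ⟨hs.2.2.2.2 p hp q hq hd, ?_, ?_, ?_⟩
    · intro s; have := (hqP s).1; simp only [Pi.add_apply]; linarith
    · intro s; have := (hpP s).1; simp only [Pi.add_apply]; linarith
    · intro x hx hpx hqx
      have hx' : (1 - x) ∈ P := hs.2.2.2.1 x hx
      have h1 : p ≤ 1 - (1 - x) := by
        intro s; have := hpx s
        simp only [Pi.sub_apply, Pi.one_apply] at *; linarith
      have h2 : q ≤ 1 - (1 - x) := by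
        intro s; have := hqx s
        simp only [Pi.sub_apply, Pi.one_apply] at *; linarith
      have := hw.2.2.2.2 p hp (1 - x) hx' q hq h1 h2 hd
      intro s; have := this s
      simp only [Pi.add_apply, Pi.sub_apply, Pi.one_apply] at *
      linarith
end

section
/- Let P be a bounded poset with antitone involution arising from a specific set of S-probabilities, i.e., P ⊆ [0,1]^S with pointwise order, 0,1 ∈ P, closure under p ↦ 1−p, and p ∧ q = 0 implying p+q ∈ P. Then the family of evaluation maps {s_x : x ∈ S}, where s_x(p) := p(x), is a full and uniform set of specific states on P. -/
/-- A specific state on a set of `S`-probabilities. -/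
def SpecificState {S : Type*} (P : Set (S → ℝ)) (s : (S → ℝ) → ℝ) : Prop :=
  (∀ p ∈ P, 0 ≤ s p ∧ s p ≤ 1) ∧ s 0 = 0 ∧ s 1 = 1 ∧
  (∀ p ∈ P, s (1 - p) = 1 - s p) ∧
  (∀ p ∈ P, ∀ q ∈ P, p ≤ q → s p ≤ s q) ∧
  (∀ p ∈ P, ∀ q ∈ P, Disj P p q → ∃ r ∈ P, p ≤ r ∧ q ≤ r ∧ s r = s p + s q)

theorem stmt_14 {S : Type*} (P : Set (S → ℝ)) (hP : Specific P) :
    (∀ x : S, SpecificState P (fun p => p x)) ∧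
    (∀ p ∈ P, ∀ q ∈ P, (∀ x : S, p x ≤ q x) → p ≤ q) ∧
    (∀ p ∈ P, ∀ q ∈ P, Disj P p q →
      ∃ r ∈ P, p ≤ r ∧ q ≤ r ∧ ∀ x : S, r x = p x + q x) := by
  obtain ⟨hprob, h0, h1, hcompl, hsum⟩ := hP
  have key : ∀ p ∈ P, ∀ q ∈ P, Disj P p q →
      p + q ∈ P ∧ p ≤ p + q ∧ q ≤ p + q := by
    intro p hp q hq hd
    refine ⟨hsum p hp q hq hd, fun x => ?_, fun x => ?_⟩
    · simpa using (hprob q hq x).1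
    · simpa using (hprob p hp x).1
  refine ⟨fun x => ?_, fun p _ q _ h => fun x => h x, fun p hp q hq hd => ?_⟩
  · refine ⟨fun p hp => hprob p hp x, rfl, rfl, fun p _ => by simp, fun p _ q _ h => h x,
      fun p hp q hq hd => ?_⟩
    obtain ⟨hr, h1, h2⟩ := key p hp q hq hd
    exact ⟨p + q, hr, h1, h2, rfl⟩
  · obtain ⟨hr, h1, h2⟩ := key p hp q hq hd
    exact ⟨p + q, hr, h1, h2, fun x => rfl⟩
end

section
/- Let (P, ≤, ', 0, 1) be a bounded poset with an antitone involution possessing a full and uniform set T of specific states. Define f : P → [0,1]^T by (f(p))(t) := t(p). Then f is an order embedding (f(p) ≤ f(q) pointwise iff p ≤ q, hence injective), f(0) and f(1) are the constant functions 0 and 1, f(p') = 1 − f(p), and if f(p) and f(q) have no nonzero common lower bound in f(P) then f(p) + f(q) ∈ f(P); consequently f(P) is a specific set of T-probabilities isomorphic to P. -/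
/-- A specific state on a bounded poset with an antitone involution `c`. -/
def AbsSpecificState {P : Type*} [PartialOrder P] [BoundedOrder P]
    (c : P → P) (s : P → ℝ) : Prop :=
  (∀ p, 0 ≤ s p ∧ s p ≤ 1) ∧ s ⊥ = 0 ∧ s ⊤ = 1 ∧
  (∀ p, s (c p) = 1 - s p) ∧
  (∀ p q : P, p ≤ q → s p ≤ s q) ∧
  (∀ p q : P, (∀ x, x ≤ p → x ≤ q → x = ⊥) → ∃ r, p ≤ r ∧ q ≤ r ∧ s r = s p + s q)

theorem stmt_15 {P : Type*} [PartialOrder P] [BoundedOrder P]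
    (c : P → P) (hanti : ∀ p q : P, p ≤ q → c q ≤ c p) (hinv : ∀ p : P, c (c p) = p)
    (T : Set (P → ℝ)) (hT : ∀ s ∈ T, AbsSpecificState c s)
    (hfull : ∀ p q : P, (∀ s ∈ T, s p ≤ s q) → p ≤ q)
    (hunif : ∀ p q : P, (∀ x, x ≤ p → x ≤ q → x = ⊥) →
      ∃ r, p ≤ r ∧ q ≤ r ∧ ∀ s ∈ T, s r = s p + s q) :
    ∃ f : P → (T → ℝ),
      (∀ (p : P) (t : T), f p t = (t : P → ℝ) p) ∧
      (∀ p q : P, f p ≤ f q ↔ p ≤ q) ∧ Function.Injective f ∧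
      f ⊥ = 0 ∧ f ⊤ = 1 ∧ (∀ p : P, f (c p) = 1 - f p) ∧
      (∀ p q : P, Disj (Set.range f) (f p) (f q) → f p + f q ∈ Set.range f) ∧
      Specific (Set.range f) := by
  refine ⟨fun p t => (t : P → ℝ) p, fun p t => rfl, ?_⟩
  set f : P → (T → ℝ) := fun p t => (t : P → ℝ) p with hf
  have hle : ∀ p q : P, f p ≤ f q ↔ p ≤ q := by
    intro p q
    constructor
    · intro h
      exact hfull p q fun s hs => h ⟨s, hs⟩
    · intro h t
      exact (hT t t.2).2.2.2.2.1 p q h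
  have hinj : Function.Injective f := by
    intro p q h
    exact le_antisymm ((hle p q).1 h.le) ((hle q p).1 h.ge)
  have hbot : f ⊥ = 0 := by
    funext t; exact (hT t t.2).2.1
  have htop : f ⊤ = 1 := by
    funext t; exact (hT t t.2).2.2.1
  have hcompl : ∀ p : P, f (c p) = 1 - f p := by
    intro p; funext t; exact (hT t t.2).2.2.2.1 p
  have hsum : ∀ p q : P, Disj (Set.range f) (f p) (f q) → f p + f q ∈ Set.range f := by
    intro p q hd
    have hdP : ∀ x, x ≤ p → x ≤ q → x = ⊥ := by
      intro x hxp hxq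
      have h0 : f x = 0 := hd (f x) ⟨x, rfl⟩ ((hle x p).2 hxp) ((hle x q).2 hxq)
      exact hinj (h0.trans hbot.symm)
    obtain ⟨r, _, _, hr⟩ := hunif p q hdP
    exact ⟨r, by funext t; exact (hr t t.2).trans rfl⟩
  refine ⟨hle, hinj, hbot, htop, hcompl, hsum, ?_⟩
  refine ⟨?_, ⟨⊥, hbot⟩, ⟨⊤, htop⟩, ?_, ?_⟩
  · rintro _ ⟨p, rfl⟩ t
    exact (hT t t.2).1 p
  · rintro _ ⟨p, rfl⟩
    exact ⟨c p, hcompl p⟩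
  · rintro _ ⟨p, rfl⟩ _ ⟨q, rfl⟩ hd
    exact hsum p q hd
end

section
/- In a specific set P of varying S-probabilities, disjointness and orthogonality coincide: for p, q ∈ P, p ∧ q = 0 in P if and only if p ≤ 1 − q pointwise. -/
theorem stmt_16 {S : Type*} (P : Set (S → ℝ)) (hP : Specific P)
    (hv : ∀ p ∈ P, Varying p) (p q : S → ℝ) (hp : p ∈ P) (hq : q ∈ P) :
    Disj P p q ↔ p ≤ 1 - q := by
  obtain ⟨hprob, h0, h1, hcompl, hsum⟩ := hP
  constructor
  · intro hd s
    have hmem := hsum p hp q hq hd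
    have := (hprob _ hmem s).2
    simp only [Pi.add_apply, Pi.sub_apply, Pi.one_apply] at *
    linarith
  · intro hle x hx hxp hxq
    have hx12 : x ≤ fun _ => (1/2 : ℝ) := by
      intro s
      have h1 := hxp s
      have h2 := hxq s
      have h3 := hle s
      simp only [Pi.sub_apply, Pi.one_apply] at h3
      simp only
      linarith
    by_contra hx0
    rcases eq_or_ne x 1 with h1' | h1'
    · subst h1'
      exact hx0 (funext fun s => by have := hx12 s; simp at this; linarith)
    · exact (hv x hx hx0 h1').1 hx12
end

section
/- If P is a specific set of S-probabilities and p, q ∈ P are disjoint (p ∧ q = 0 in P), then p + q ≤ 1 pointwise, i.e., p ≤ q' (p ⊥ q); hence every specific set of S-probabilities is a Boolean poset with respect to the antitone involution p ↦ 1−p. -/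
theorem stmt_17 {S : Type*} (P : Set (S → ℝ)) (hP : Specific P) :
    (∀ p ∈ P, ∀ q ∈ P, Disj P p q → p + q ≤ 1 ∧ p ≤ 1 - q) ∧ BooleanSet P := by
  obtain ⟨hprob, h0, h1, hcomp, hsum⟩ := hP
  have key : ∀ p ∈ P, ∀ q ∈ P, Disj P p q → p + q ≤ 1 ∧ p ≤ 1 - q := by
    intro p hp q hq hd
    have hmem := hsum p hp q hq hd
    have hle : p + q ≤ 1 := fun s => (hprob _ hmem s).2
    exact ⟨hle, fun s => by have := hle s; simp only [Pi.add_apply, Pi.one_apply, Pi.sub_apply] at this ⊢; linarith⟩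
  exact ⟨key, fun p hp q hq hd => (key p hp q hq hd).2⟩
end
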